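/- arXiv:2509.04350 — 3 statements merged into one kernel-verified Lean document; each statement's English description precedes it below -/
import Mathlib

section
/- Let n ≥ 1, let A ∈ M_n(ℤ) be non-singular, and let T ∈ M_n(ℤ) with det T = ±1. Then the following are equivalent: (i) for every natural number m there exists a natural number k such that the rational matrix A^(−m)·T·A^k has all entries in ℤ; (ii) the transpose Tᵗ satisfies Tᵗ·G_{Aᵗ} ⊆ G_{Aᵗ}, i.e., Tᵗ defines an endomorphism of G_{Aᵗ}. -/
open Matrix Polynomial

/-- The image of an integer matrix in `M_n(ℚ)`. -/
noncomputable def Qmat {n : ℕ} (A : Matrix (Fin n) (Fin n) ℤ) : Matrix (Fin n) (Fin n) ℚ :=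
  A.map (Int.cast : ℤ → ℚ)

/-- `G_A = {A^k x : x ∈ ℤ^n, k ∈ ℤ} ⊆ ℚ^n`, negative powers taken in `M_n(ℚ)`. -/
noncomputable def GA {n : ℕ} (A : Matrix (Fin n) (Fin n) ℤ) : Set (Fin n → ℚ) :=
  {w | ∃ (x : Fin n → ℤ) (k : ℤ), w = (Qmat A ^ k) *ᵥ (fun i => (x i : ℚ))}

/-- `G_A` as an additive subgroup of `ℚ^n` (it is closed under the group operations,
so the closure has carrier exactly `G_A`). -/
noncomputable def GAgrp {n : ℕ} (A : Matrix (Fin n) (Fin n) ℤ) : AddSubgroup (Fin n → ℚ) :=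
  AddSubgroup.closure (GA A)

/-- The subring `ℤ[1/d] = {a / d^m : a ∈ ℤ, m ∈ ℕ}` of `ℚ`. -/
def Zinv (d : ℤ) : Set ℚ :=
  {q | ∃ (a : ℤ) (m : ℕ), q = (a : ℚ) / (d : ℚ) ^ m}

/-- The radical of an integer: the product of its distinct positive prime divisors. -/
def rad (N : ℤ) : ℕ := ∏ p ∈ N.natAbs.primeFactors, p

/-- A rational matrix has all entries in `ℤ`. -/
def intEntries {n : ℕ} (T : Matrix (Fin n) (Fin n) ℚ) : Prop :=
  ∀ i j, ∃ m : ℤ, T i j = (m : ℚ)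

section helpers
variable {n : ℕ}

lemma Qmat_mul (A B : Matrix (Fin n) (Fin n) ℤ) : Qmat (A * B) = Qmat A * Qmat B :=
  Matrix.map_mul (f := (Int.castRingHom ℚ))

lemma Qmat_pow (A : Matrix (Fin n) (Fin n) ℤ) (k : ℕ) : Qmat (A ^ k) = Qmat A ^ k := by
  induction k with
  | zero =>
    ext i j
    simp only [pow_zero, Qmat, Matrix.map_apply, Matrix.one_apply]
    split <;> simp
  | succ k ih => rw [pow_succ, pow_succ, Qmat_mul, ih]

lemma Qmat_transpose (A : Matrix (Fin n) (Fin n) ℤ) : Qmat Aᵀ = (Qmat A)ᵀ := rfl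

lemma Qmat_mulVec (A : Matrix (Fin n) (Fin n) ℤ) (x : Fin n → ℤ) :
    Qmat A *ᵥ (fun i => (x i : ℚ)) = fun i => ((A *ᵥ x) i : ℚ) := by
  ext i; simp [Qmat, mulVec, dotProduct]

lemma det_Qmat (A : Matrix (Fin n) (Fin n) ℤ) : (Qmat A).det = (A.det : ℚ) := by
  simpa [Qmat] using (RingHom.map_det (Int.castRingHom ℚ) A).symm
end helpers

theorem stmt10 (n : ℕ) (hn : 1 ≤ n) (A : Matrix (Fin n) (Fin n) ℤ) (hA : A.det ≠ 0)
    (T : Matrix (Fin n) (Fin n) ℤ) (hT : T.det = 1 ∨ T.det = -1) :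
    (∀ m : ℕ, ∃ k : ℕ, intEntries (Qmat A ^ (-(m : ℤ)) * Qmat T * Qmat A ^ (k : ℕ))) ↔
      (∀ w ∈ GA Aᵀ, Qmat Tᵀ *ᵥ w ∈ GA Aᵀ) := by
  have hdA : IsUnit (Qmat A).det := by
    rw [det_Qmat]; exact isUnit_iff_ne_zero.2 (by exact_mod_cast hA)
  have hdAT : IsUnit (Qmat Aᵀ).det := by
    rw [Qmat_transpose, Matrix.det_transpose]; exact hdA
  constructor
  · -- (i) → (ii)
    intro h w hw
    obtain ⟨x, k, rfl⟩ := hw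
    set m : ℕ := (-k).toNat with hm
    set p : ℕ := ((m : ℤ) + k).toNat with hp
    have hpk : (p : ℤ) = (m : ℤ) + k := by omega
    obtain ⟨k', hk'⟩ := h m
    obtain ⟨B, hB⟩ : ∃ B : Matrix (Fin n) (Fin n) ℤ,
        Qmat A ^ (-(m : ℤ)) * Qmat T * Qmat A ^ (k' : ℕ) = Qmat B := by
      refine ⟨fun i j => (hk' i j).choose, ?_⟩
      ext i j; exact (hk' i j).choose_spec
    -- A^{-m} T = B A^{-k'}
    have e1 : Qmat A ^ (-(m : ℤ)) * Qmat T = Qmat B * Qmat A ^ (-(k' : ℤ)) := by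
      have hcan : Qmat A ^ (k' : ℕ) * Qmat A ^ (-(k' : ℤ)) = 1 := by
        rw [← zpow_natCast (Qmat A) k', ← Matrix.zpow_add hdA]
        simp
      rw [← hB, mul_assoc (Qmat A ^ (-(m : ℤ)) * Qmat T), hcan, mul_one]
    -- transpose version
    have e2 : Qmat Tᵀ * (Qmat Aᵀ) ^ (-(m : ℤ)) = (Qmat Aᵀ) ^ (-(k' : ℤ)) * Qmat Bᵀ := by
      rw [Qmat_transpose, Qmat_transpose, Qmat_transpose, ← Matrix.transpose_zpow,
        ← Matrix.transpose_mul, e1, Matrix.transpose_mul, Matrix.transpose_zpow]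
    have hsplit : (Qmat Aᵀ) ^ k = (Qmat Aᵀ) ^ (-(m : ℤ)) * (Qmat Aᵀ) ^ ((p : ℕ)) := by
      rw [← zpow_natCast (Qmat Aᵀ) p, ← Matrix.zpow_add hdAT]
      congr 1; omega
    have key : Qmat Tᵀ * (Qmat Aᵀ) ^ k
        = (Qmat Aᵀ) ^ (-(k' : ℤ)) * Qmat (Bᵀ * Aᵀ ^ p) := by
      rw [hsplit, ← mul_assoc, e2, mul_assoc, Qmat_mul, Qmat_pow]
    refine ⟨(Bᵀ * Aᵀ ^ p) *ᵥ x, -(k' : ℤ), ?_⟩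
    rw [Matrix.mulVec_mulVec, key, ← Matrix.mulVec_mulVec, Qmat_mulVec]
  · -- (ii) → (i)
    intro h m
    choose x k hx using fun j : Fin n =>
      h ((Qmat Aᵀ) ^ (-(m : ℤ)) *ᵥ (fun i => ((Pi.single j 1 : Fin n → ℤ) i : ℚ)))
        ⟨Pi.single j 1, -(m : ℤ), rfl⟩
    set K : ℕ := Finset.univ.sup fun j : Fin n => (-(k j)).toNat with hK
    refine ⟨K, ?_⟩
    intro j l
    have hle : (-(k j)).toNat ≤ K := by
      simpa using Finset.le_sup (f := fun j : Fin n => (-(k j)).toNat) (Finset.mem_univ j)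
    have hKj : 0 ≤ (K : ℤ) + k j := by omega
    set q : ℕ := ((K : ℤ) + k j).toNat with hq
    have hsingle : (fun i => ((Pi.single j 1 : Fin n → ℤ) i : ℚ))
        = (Pi.single j (1 : ℚ) : Fin n → ℚ) := by
      ext i; simp [Pi.single_apply]
    -- row j of the product
    have row_eq : (fun l => (Qmat A ^ (-(m : ℤ)) * Qmat T * Qmat A ^ (K : ℕ)) j l)
        = fun l => (((Aᵀ ^ q) *ᵥ (x j)) l : ℚ) := by
      have hmat : Qmat Aᵀ ^ ((K : ℕ) : ℤ) * Qmat Tᵀ * Qmat Aᵀ ^ (-(m : ℤ))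
          = (Qmat A ^ (-(m : ℤ)) * Qmat T * Qmat A ^ (K : ℕ))ᵀ := by
        rw [Qmat_transpose, Qmat_transpose, zpow_natCast,
          ← Matrix.transpose_pow, ← Matrix.transpose_zpow, ← Matrix.transpose_mul,
          ← Matrix.transpose_mul, mul_assoc]
      have step1 : (fun l => (Qmat A ^ (-(m : ℤ)) * Qmat T * Qmat A ^ (K : ℕ)) j l)
          = Qmat Aᵀ ^ ((K : ℕ) : ℤ) *ᵥ (Qmat Tᵀ *ᵥ ((Qmat Aᵀ) ^ (-(m : ℤ))
              *ᵥ (fun i => ((Pi.single j 1 : Fin n → ℤ) i : ℚ)))) := by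
        rw [Matrix.mulVec_mulVec, Matrix.mulVec_mulVec, hmat, hsingle,
          Matrix.mulVec_single_one]
        rfl
      rw [step1, hx j, Matrix.mulVec_mulVec, ← Matrix.zpow_add hdAT]
      have hqc : ((K : ℕ) : ℤ) + k j = (q : ℤ) := by omega
      rw [hqc, zpow_natCast, ← Qmat_pow, Qmat_mulVec]
    exact ⟨(Aᵀ ^ q *ᵥ x j) l, congrFun row_eq l⟩
end

section
/- Let A = [[0,−6],[1,1]] and B = [[0,−3],[2,1]] in M_2(ℤ) (both with characteristic polynomial x² − x + 6). Then there exists an additive group isomorphism between G_A and G_B. -/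
open Matrix Polynomial

theorem stmt17 :
    Nonempty (GAgrp !![(0 : ℤ), -6; 1, 1] ≃+ GAgrp !![(0 : ℤ), -3; 2, 1]) := by
  set A : Matrix (Fin 2) (Fin 2) ℤ := !![(0 : ℤ), -6; 1, 1] with hA
  set B : Matrix (Fin 2) (Fin 2) ℤ := !![(0 : ℤ), -3; 2, 1] with hB
  have hQA : Qmat A = !![(0 : ℚ), -6; 1, 1] := by
    simp [Qmat, hA, Matrix.map]
    ext i j
    fin_cases i <;> fin_cases j <;> norm_num
  have hQB : Qmat B = !![(0 : ℚ), -3; 2, 1] := by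
    simp [Qmat, hB, Matrix.map]
    ext i j
    fin_cases i <;> fin_cases j <;> norm_num
  set Q : Matrix (Fin 2) (Fin 2) ℚ := !![(0 : ℚ), -3; 1, 1] with hQ
  set Qi : Matrix (Fin 2) (Fin 2) ℚ := !![(1/3 : ℚ), 1; -1/3, 0] with hQi
  have hQQi : Q * Qi = 1 := by
    rw [hQ, hQi, Matrix.mul_fin_two, Matrix.one_fin_two]
    norm_num
  have hQiQ : Qi * Q = 1 := by
    rw [hQ, hQi, Matrix.mul_fin_two, Matrix.one_fin_two]
    norm_num
  have hdetA : IsUnit (Qmat A).det := by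
    rw [hQA, Matrix.det_fin_two_of]
    norm_num
  have hdetB : IsUnit (Qmat B).det := by
    rw [hQB, Matrix.det_fin_two_of]
    norm_num
  -- semiconjugation: Q * A = B * Q
  have semi1 : SemiconjBy Q (Qmat A) (Qmat B) := by
    show Q * Qmat A = Qmat B * Q
    rw [hQA, hQB, hQ, Matrix.mul_fin_two, Matrix.mul_fin_two]
    norm_num
  have semi2 : SemiconjBy Qi (Qmat B) (Qmat A) := by
    show Qi * Qmat B = Qmat A * Qi
    rw [hQA, hQB, hQi, Matrix.mul_fin_two, Matrix.mul_fin_two]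
    norm_num
  have semi1k : ∀ k : ℤ, Q * (Qmat A) ^ k = (Qmat B) ^ k * Q := fun k =>
    Matrix.SemiconjBy.zpow_right hdetA hdetB semi1 k
  have semi2k : ∀ k : ℤ, Qi * (Qmat B) ^ k = (Qmat A) ^ k * Qi := fun k =>
    Matrix.SemiconjBy.zpow_right hdetB hdetA semi2 k
  -- A * Qi = diag (2, 1)
  have hAQi : Qmat A * Qi = !![(2 : ℚ), 0; 0, 1] := by
    rw [hQA, hQi, Matrix.mul_fin_two]
    norm_num
  -- the ambient additive equivalence given by multiplication by Q
  let f : (Fin 2 → ℚ) ≃+ (Fin 2 → ℚ) :=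
    { toFun := fun v => Q *ᵥ v
      invFun := fun v => Qi *ᵥ v
      left_inv := fun v => by show Qi *ᵥ Q *ᵥ v = v; rw [Matrix.mulVec_mulVec, hQiQ, Matrix.one_mulVec]
      right_inv := fun v => by show Q *ᵥ Qi *ᵥ v = v; rw [Matrix.mulVec_mulVec, hQQi, Matrix.one_mulVec]
      map_add' := fun v w => by show Q *ᵥ (v + w) = Q *ᵥ v + Q *ᵥ w; exact Matrix.mulVec_add _ _ _ }
  -- f maps GA A onto GA B
  have himg : (fun v => Q *ᵥ v) '' GA A = GA B := by
    apply Set.Subset.antisymm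
    · rintro w ⟨v, ⟨x, k, rfl⟩, rfl⟩
      refine ⟨![-3 * x 1, x 0 + x 1], k, ?_⟩
      show Q *ᵥ (Qmat A ^ k *ᵥ fun i => ((x i : ℚ))) = _
      rw [Matrix.mulVec_mulVec, semi1k k, ← Matrix.mulVec_mulVec]
      congr 1
      funext i
      fin_cases i <;>
        simp [hQ, Matrix.mulVec, dotProduct, Fin.sum_univ_two] <;> push_cast <;> ring
    · rintro w ⟨z, k, rfl⟩
      refine ⟨Qi *ᵥ ((Qmat B) ^ k *ᵥ fun i => ((z i : ℚ))), ⟨![2 * z 0, z 1], k - 1, ?_⟩, ?_⟩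
      · rw [Matrix.mulVec_mulVec, semi2k k]
        have hk : (Qmat A) ^ k = (Qmat A) ^ (k - 1) * Qmat A := by
          have := Matrix.zpow_add_one hdetA (k - 1)
          rwa [sub_add_cancel] at this
        rw [hk, Matrix.mul_assoc, hAQi, ← Matrix.mulVec_mulVec]
        congr 1
        funext i
        fin_cases i <;>
          simp [Matrix.mulVec, dotProduct, Fin.sum_univ_two] <;> push_cast <;> ring
      · show Q *ᵥ (Qi *ᵥ (Qmat B ^ k *ᵥ fun i => ((z i : ℚ)))) = _
        rw [Matrix.mulVec_mulVec, Matrix.mulVec_mulVec, hQQi,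
          Matrix.one_mul]
  have hmap : (GAgrp A).map f.toAddMonoidHom = GAgrp B := by
    rw [GAgrp, GAgrp, AddMonoidHom.map_closure,
      show (⇑f.toAddMonoidHom '' GA A) = GA B from himg]
  exact ⟨(f.addSubgroupMap (GAgrp A)).trans (AddEquiv.addSubgroupCongr hmap)⟩
end

section
/- Let A = [[99,−89],[45,−35]] and B = [[−178,276],[−137,234]] in M_2(ℤ) (A has integer eigenvalues 10 and 54; B has integer eigenvalues −40 and 96). Then there is no additive group isomorphism between G_A and G_B. -/
open Matrix Polynomial

namespace Stmt18

/-- A rational vector with integer entries. -/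
def IntVec (v : Fin 2 → ℚ) : Prop := ∀ i, ∃ z : ℤ, v i = (z : ℚ)

lemma intVec_cast (x : Fin 2 → ℤ) : IntVec (fun i => (x i : ℚ)) := fun i => ⟨x i, rfl⟩

lemma Qmat_pow (M : Matrix (Fin 2) (Fin 2) ℤ) (m : ℕ) : Qmat (M ^ m) = Qmat M ^ m := by
  simpa [Qmat] using map_pow ((Int.castRingHom ℚ).mapMatrix) M m

lemma intVec_mulVec (N : Matrix (Fin 2) (Fin 2) ℤ) {v : Fin 2 → ℚ} (hv : IntVec v) :
    IntVec (Qmat N *ᵥ v) := by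
  intro i
  obtain ⟨z0, h0⟩ := hv 0
  obtain ⟨z1, h1⟩ := hv 1
  refine ⟨N i 0 * z0 + N i 1 * z1, ?_⟩
  have he : (Qmat N *ᵥ v) i = (N i 0 : ℚ) * v 0 + (N i 1 : ℚ) * v 1 := by
    simp [Matrix.mulVec, dotProduct, Fin.sum_univ_two, Qmat, Matrix.map_apply]
  rw [he, h0, h1]; push_cast; ring

lemma intVec_pow_mulVec (M : Matrix (Fin 2) (Fin 2) ℤ) (m : ℕ) {v : Fin 2 → ℚ}
    (hv : IntVec v) : IntVec (Qmat M ^ m *ᵥ v) := by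
  rw [← Qmat_pow]; exact intVec_mulVec _ hv

lemma intVec_add {v w : Fin 2 → ℚ} (hv : IntVec v) (hw : IntVec w) : IntVec (v + w) := by
  intro i
  obtain ⟨a, ha⟩ := hv i; obtain ⟨b, hb⟩ := hw i
  exact ⟨a + b, by simp [ha, hb]⟩

lemma intVec_neg {v : Fin 2 → ℚ} (hv : IntVec v) : IntVec (-v) := by
  intro i; obtain ⟨a, ha⟩ := hv i; exact ⟨-a, by simp [ha]⟩

/-- The subgroup of vectors `w` such that `A^m w` is integral for some `m ≥ 0`. -/
noncomputable def Sgrp (M : Matrix (Fin 2) (Fin 2) ℤ) : AddSubgroup (Fin 2 → ℚ) where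
  carrier := {w | ∃ m : ℕ, IntVec (Qmat M ^ m *ᵥ w)}
  zero_mem' := ⟨0, fun i => ⟨0, by simp⟩⟩
  add_mem' := by
    rintro a b ⟨ma, ha⟩ ⟨mb, hb⟩
    refine ⟨ma + mb, ?_⟩
    rw [Matrix.mulVec_add]
    apply intVec_add
    · rw [add_comm ma mb, pow_add, ← Matrix.mulVec_mulVec]
      exact intVec_pow_mulVec M mb ha
    · rw [pow_add, ← Matrix.mulVec_mulVec]
      exact intVec_pow_mulVec M ma hb
  neg_mem' := by
    rintro a ⟨m, hm⟩
    exact ⟨m, by rw [Matrix.mulVec_neg]; exact intVec_neg hm⟩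

lemma GAgrp_le_Sgrp (M : Matrix (Fin 2) (Fin 2) ℤ) (h : IsUnit (Qmat M).det) :
    GAgrp M ≤ Sgrp M := by
  rw [GAgrp, AddSubgroup.closure_le]
  rintro w ⟨x, k, rfl⟩
  refine ⟨(-k).toNat, ?_⟩
  obtain ⟨j, hj⟩ : ∃ j : ℕ, ((-k).toNat : ℤ) + k = (j : ℤ) :=
    ⟨(((-k).toNat : ℤ) + k).toNat, (Int.toNat_of_nonneg (by omega)).symm⟩
  have hcomp : Qmat M ^ ((-k).toNat) *ᵥ (Qmat M ^ k *ᵥ fun i => (x i : ℚ))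
      = Qmat M ^ j *ᵥ (fun i => (x i : ℚ)) := by
    rw [Matrix.mulVec_mulVec, ← zpow_natCast (Qmat M) ((-k).toNat), ← Matrix.zpow_add h, hj,
      zpow_natCast]
  rw [hcomp]
  exact intVec_pow_mulVec M _ (intVec_cast x)

lemma mem_GAgrp_of_pow (M : Matrix (Fin 2) (Fin 2) ℤ) (h : IsUnit (Qmat M).det)
    (w : Fin 2 → ℚ) (x : Fin 2 → ℤ) (m : ℕ)
    (hx : Qmat M ^ m *ᵥ w = fun i => (x i : ℚ)) : w ∈ GAgrp M := by
  apply AddSubgroup.subset_closure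
  refine ⟨x, -(m : ℤ), ?_⟩
  rw [← hx, Matrix.mulVec_mulVec, ← zpow_natCast (Qmat M) m,
    Matrix.zpow_neg_mul_zpow_self _ h, Matrix.one_mulVec]

/-- Main arithmetic lemma: a rational `r` such that for every `n` we have
`c^m * r = p^n * z` for some `m, z` must be `0` (when `gcd(p, c) = 1`, `p ≥ 2`). -/
lemma rat_zero (p : ℕ) (hp : 2 ≤ p) (c : ℤ) (hcop : IsCoprime (p : ℤ) c) (r : ℚ)
    (H : ∀ n : ℕ, ∃ (m : ℕ) (z : ℤ), (c : ℚ) ^ m * r = (p : ℚ) ^ n * z) : r = 0 := by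
  by_contra hr
  set n : ℕ := r.num.natAbs + 1 with hn
  obtain ⟨m, z, heq⟩ := H n
  have hden : (r.den : ℚ) ≠ 0 := Nat.cast_ne_zero.mpr r.pos.ne'
  have h3 : r * (r.den : ℚ) = (r.num : ℚ) := by
    exact ((div_eq_iff hden).mp (Rat.num_div_den r)).symm
  have h4 : ((c : ℚ)) ^ m * (r.num : ℚ) = ((p : ℚ) ^ n * z) * (r.den : ℚ) := by
    calc ((c : ℚ)) ^ m * (r.num : ℚ) = ((c : ℚ) ^ m * r) * (r.den : ℚ) := by rw [← h3]; ring
      _ = ((p : ℚ) ^ n * z) * (r.den : ℚ) := by rw [heq]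
  have hzint : (c : ℤ) ^ m * r.num = (p : ℤ) ^ n * (z * (r.den : ℤ)) := by
    have h5 : ((c ^ m * r.num : ℤ) : ℚ) = (((p : ℤ) ^ n * (z * (r.den : ℤ)) : ℤ) : ℚ) := by
      push_cast
      linear_combination h4
    exact_mod_cast h5
  have hdvd : ((p : ℤ) ^ n) ∣ r.num := by
    have h5 : ((p : ℤ) ^ n) ∣ (c : ℤ) ^ m * r.num := ⟨z * r.den, hzint⟩
    exact IsCoprime.dvd_of_dvd_mul_left (IsCoprime.pow hcop) h5
  have hnum : r.num ≠ 0 := Rat.num_ne_zero.mpr hr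
  have hle : (p : ℤ) ^ n ≤ (r.num.natAbs : ℤ) :=
    Int.le_of_dvd (by exact_mod_cast Int.natAbs_pos.mpr hnum) (Int.dvd_natAbs.mpr hdvd)
  have h6 : r.num.natAbs < 2 ^ n := by
    have := (Nat.lt_two_pow_self (n := r.num.natAbs))
    calc r.num.natAbs < 2 ^ r.num.natAbs * 2 := by omega
      _ = 2 ^ n := by rw [hn, pow_succ]
  have h7 : (2 : ℤ) ^ n ≤ (p : ℤ) ^ n := by
    apply pow_le_pow_left₀ (by norm_num)
    exact_mod_cast hp
  have h8 : (r.num.natAbs : ℤ) < (2 : ℤ) ^ n := by exact_mod_cast h6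
  linarith

end Stmt18
namespace Stmt18

abbrev Av : Matrix (Fin 2) (Fin 2) ℤ := !![99, -89; 45, -35]
abbrev Bv : Matrix (Fin 2) (Fin 2) ℤ := !![-178, 276; -137, 234]

lemma QA_eq : Qmat Av = !![(99 : ℚ), -89; 45, -35] := by
  ext i j; fin_cases i <;> fin_cases j <;> simp [Qmat]

lemma QB_eq : Qmat Bv = !![(-178 : ℚ), 276; -137, 234] := by
  ext i j; fin_cases i <;> fin_cases j <;> simp [Qmat]

lemma hdetA : IsUnit (Qmat Av).det := by
  rw [QA_eq]
  simp [Matrix.det_fin_two_of]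
  norm_num

lemma hdetB : IsUnit (Qmat Bv).det := by
  rw [QB_eq]
  simp [Matrix.det_fin_two_of]
  norm_num

lemma QA_mulVec (v : Fin 2 → ℚ) :
    Qmat Av *ᵥ v = ![99 * v 0 - 89 * v 1, 45 * v 0 - 35 * v 1] := by
  rw [QA_eq]; funext i; fin_cases i <;>
    simp [Matrix.mulVec, dotProduct, Fin.sum_univ_two] <;> ring

lemma QB_mulVec (v : Fin 2 → ℚ) :
    Qmat Bv *ᵥ v = ![-178 * v 0 + 276 * v 1, -137 * v 0 + 234 * v 1] := by
  rw [QB_eq]; funext i; fin_cases i <;>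
    simp [Matrix.mulVec, dotProduct, Fin.sum_univ_two] <;> ring

def phiA (w : Fin 2 → ℚ) : ℚ := w 0 - w 1
def psiA (w : Fin 2 → ℚ) : ℚ := 89 * w 1 - 45 * w 0
def phiB (w : Fin 2 → ℚ) : ℚ := 2 * w 1 - w 0
def psiB (w : Fin 2 → ℚ) : ℚ := 137 * w 0 - 138 * w 1

lemma phiA_pow (m : ℕ) (z : Fin 2 → ℚ) : phiA (Qmat Av ^ m *ᵥ z) = 54 ^ m * phiA z := by
  induction m with
  | zero => simp [phiA]
  | succ m ih =>
    rw [pow_succ', ← Matrix.mulVec_mulVec, QA_mulVec]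
    unfold phiA at ih ⊢
    simp only [Matrix.cons_val_zero, Matrix.cons_val_one, Matrix.head_cons]
    rw [pow_succ]
    linear_combination (54 : ℚ) * ih

lemma psiA_pow (m : ℕ) (z : Fin 2 → ℚ) : psiA (Qmat Av ^ m *ᵥ z) = 10 ^ m * psiA z := by
  induction m with
  | zero => simp [psiA]
  | succ m ih =>
    rw [pow_succ', ← Matrix.mulVec_mulVec, QA_mulVec]
    unfold psiA at ih ⊢
    simp only [Matrix.cons_val_zero, Matrix.cons_val_one, Matrix.head_cons]
    rw [pow_succ]
    linear_combination (10 : ℚ) * ih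

lemma phiB_pow (m : ℕ) (z : Fin 2 → ℚ) : phiB (Qmat Bv ^ m *ᵥ z) = 96 ^ m * phiB z := by
  induction m with
  | zero => simp [phiB]
  | succ m ih =>
    rw [pow_succ', ← Matrix.mulVec_mulVec, QB_mulVec]
    unfold phiB at ih ⊢
    simp only [Matrix.cons_val_zero, Matrix.cons_val_one, Matrix.head_cons]
    rw [pow_succ]
    linear_combination (96 : ℚ) * ih

lemma psiB_pow (m : ℕ) (z : Fin 2 → ℚ) : psiB (Qmat Bv ^ m *ᵥ z) = (-40) ^ m * psiB z := by
  induction m with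
  | zero => simp [psiB]
  | succ m ih =>
    rw [pow_succ', ← Matrix.mulVec_mulVec, QB_mulVec]
    unfold psiB at ih ⊢
    simp only [Matrix.cons_val_zero, Matrix.cons_val_one, Matrix.head_cons]
    rw [pow_succ]
    linear_combination (-40 : ℚ) * ih

lemma intVec_phiA {v : Fin 2 → ℚ} (h : IntVec v) : ∃ z : ℤ, phiA v = z := by
  obtain ⟨a, ha⟩ := h 0; obtain ⟨b, hb⟩ := h 1
  exact ⟨a - b, by unfold phiA; rw [ha, hb]; push_cast; ring⟩

lemma intVec_psiA {v : Fin 2 → ℚ} (h : IntVec v) : ∃ z : ℤ, psiA v = z := by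
  obtain ⟨a, ha⟩ := h 0; obtain ⟨b, hb⟩ := h 1
  exact ⟨89 * b - 45 * a, by unfold psiA; rw [ha, hb]; push_cast; ring⟩

lemma intVec_phiB {v : Fin 2 → ℚ} (h : IntVec v) : ∃ z : ℤ, phiB v = z := by
  obtain ⟨a, ha⟩ := h 0; obtain ⟨b, hb⟩ := h 1
  exact ⟨2 * b - a, by unfold phiB; rw [ha, hb]; push_cast; ring⟩

lemma intVec_psiB {v : Fin 2 → ℚ} (h : IntVec v) : ∃ z : ℤ, psiB v = z := by
  obtain ⟨a, ha⟩ := h 0; obtain ⟨b, hb⟩ := h 1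
  exact ⟨137 * a - 138 * b, by unfold psiB; rw [ha, hb]; push_cast; ring⟩

/-- Infinite `p`-divisibility inside the subgroup `H`. -/
def DivP (H : AddSubgroup (Fin 2 → ℚ)) (p : ℕ) (w : Fin 2 → ℚ) : Prop :=
  ∀ n : ℕ, ∃ h ∈ H, w = ((p : ℚ) ^ n) • h

lemma vanish (M : Matrix (Fin 2) (Fin 2) ℤ) (hdet : IsUnit (Qmat M).det)
    (f : (Fin 2 → ℚ) → ℚ) (c : ℤ) (p : ℕ) (hp : 2 ≤ p) (hcop : IsCoprime (p : ℤ) c)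
    (hscale : ∀ (m : ℕ) (z : Fin 2 → ℚ), f (Qmat M ^ m *ᵥ z) = (c : ℚ) ^ m * f z)
    (hsmul : ∀ (q : ℚ) (z : Fin 2 → ℚ), f (q • z) = q * f z)
    (hint : ∀ v, IntVec v → ∃ z : ℤ, f v = z)
    {w : Fin 2 → ℚ} (hw : DivP (GAgrp M) p w) : f w = 0 := by
  apply rat_zero p hp c hcop
  intro n
  obtain ⟨h, hmem, hwh⟩ := hw n
  obtain ⟨m, hm⟩ := GAgrp_le_Sgrp M hdet hmem
  obtain ⟨z, hz⟩ := hint _ hm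
  have h1 : (c : ℚ) ^ m * f h = z := by rw [← hscale]; exact hz
  refine ⟨m, z, ?_⟩
  rw [hwh, hsmul]
  linear_combination ((p : ℚ) ^ n) * h1

end Stmt18
namespace Stmt18

def uA : Fin 2 → ℚ := ![1, 1]
def vA : Fin 2 → ℚ := ![89, 45]
def uB : Fin 2 → ℚ := ![2, 1]
def vB : Fin 2 → ℚ := ![138, 137]

lemma QA_pow_uA (m : ℕ) (q : ℚ) : Qmat Av ^ m *ᵥ (q • uA) = (10 ^ m * q) • uA := by
  induction m with
  | zero => simp
  | succ m ih =>
    rw [pow_succ', ← Matrix.mulVec_mulVec, ih, QA_mulVec]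
    funext i; fin_cases i <;> simp [uA] <;> ring

lemma QA_pow_vA (m : ℕ) (q : ℚ) : Qmat Av ^ m *ᵥ (q • vA) = (54 ^ m * q) • vA := by
  induction m with
  | zero => simp
  | succ m ih =>
    rw [pow_succ', ← Matrix.mulVec_mulVec, ih, QA_mulVec]
    funext i; fin_cases i <;> simp [vA] <;> ring

lemma QB_pow_uB (m : ℕ) (q : ℚ) : Qmat Bv ^ m *ᵥ (q • uB) = ((-40) ^ m * q) • uB := by
  induction m with
  | zero => simp
  | succ m ih =>
    rw [pow_succ', ← Matrix.mulVec_mulVec, ih, QB_mulVec]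
    funext i; fin_cases i <;> simp [uB] <;> ring

lemma QB_pow_vB (m : ℕ) (q : ℚ) : Qmat Bv ^ m *ᵥ (q • vB) = (96 ^ m * q) • vB := by
  induction m with
  | zero => simp
  | succ m ih =>
    rw [pow_succ', ← Matrix.mulVec_mulVec, ih, QB_mulVec]
    funext i; fin_cases i <;> simp [vB] <;> ring

lemma mem_uA {q : ℚ} (m : ℕ) (z : ℤ) (hq : 10 ^ m * q = (z : ℚ)) : q • uA ∈ GAgrp Av := by
  apply mem_GAgrp_of_pow Av hdetA _ ![z, z] m
  rw [QA_pow_uA, hq]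
  funext i; fin_cases i <;> simp [uA]

lemma mem_vA {q : ℚ} (m : ℕ) (z : ℤ) (hq : 54 ^ m * q = (z : ℚ)) : q • vA ∈ GAgrp Av := by
  apply mem_GAgrp_of_pow Av hdetA _ ![89 * z, 45 * z] m
  rw [QA_pow_vA, hq]
  funext i; fin_cases i <;> simp [vA] <;> push_cast <;> ring

lemma mem_uB {q : ℚ} (m : ℕ) (z : ℤ) (hq : (-40) ^ m * q = (z : ℚ)) : q • uB ∈ GAgrp Bv := by
  apply mem_GAgrp_of_pow Bv hdetB _ ![2 * z, z] m
  rw [QB_pow_uB, hq]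
  funext i; fin_cases i <;> simp [uB] <;> push_cast <;> ring

lemma mem_vB {q : ℚ} (m : ℕ) (z : ℤ) (hq : 96 ^ m * q = (z : ℚ)) : q • vB ∈ GAgrp Bv := by
  apply mem_GAgrp_of_pow Bv hdetB _ ![138 * z, 137 * z] m
  rw [QB_pow_vB, hq]
  funext i; fin_cases i <;> simp [vB] <;> push_cast <;> ring

lemma div3_vA {q : ℚ} (m : ℕ) (z : ℤ) (hq : 54 ^ m * q = (z : ℚ)) :
    DivP (GAgrp Av) 3 (q • vA) := by
  intro n
  have h3n : ((3 : ℚ)) ^ n ≠ 0 := by positivity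
  refine ⟨(q / 3 ^ n) • vA, mem_vA (m + n) (z * 18 ^ n) ?_, ?_⟩
  · have h1 : (54 : ℚ) ^ n = 18 ^ n * 3 ^ n := by rw [← mul_pow]; norm_num
    rw [pow_add, h1]
    field_simp
    push_cast
    linear_combination ((18 : ℚ) ^ n) * hq
  · rw [smul_smul]
    congr 1
    field_simp
    norm_num
  -- q • vA = 3^n • ((q/3^n) • vA)

lemma div5_uA {q : ℚ} (m : ℕ) (z : ℤ) (hq : 10 ^ m * q = (z : ℚ)) :
    DivP (GAgrp Av) 5 (q • uA) := by
  intro n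
  have h5n : ((5 : ℚ)) ^ n ≠ 0 := by positivity
  refine ⟨(q / 5 ^ n) • uA, mem_uA (m + n) (z * 2 ^ n) ?_, ?_⟩
  · have h1 : (10 : ℚ) ^ n = 2 ^ n * 5 ^ n := by rw [← mul_pow]; norm_num
    rw [pow_add, h1]
    field_simp
    push_cast
    linear_combination ((2 : ℚ) ^ n) * hq
  · rw [smul_smul]
    congr 1
    field_simp
    norm_num

lemma div3_vB {q : ℚ} (m : ℕ) (z : ℤ) (hq : 96 ^ m * q = (z : ℚ)) :
    DivP (GAgrp Bv) 3 (q • vB) := by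
  intro n
  have h3n : ((3 : ℚ)) ^ n ≠ 0 := by positivity
  refine ⟨(q / 3 ^ n) • vB, mem_vB (m + n) (z * 32 ^ n) ?_, ?_⟩
  · have h1 : (96 : ℚ) ^ n = 32 ^ n * 3 ^ n := by rw [← mul_pow]; norm_num
    rw [pow_add, h1]
    field_simp
    push_cast
    linear_combination ((32 : ℚ) ^ n) * hq
  · rw [smul_smul]
    congr 1
    field_simp
    norm_num

lemma div5_uB {q : ℚ} (m : ℕ) (z : ℤ) (hq : (-40) ^ m * q = (z : ℚ)) :
    DivP (GAgrp Bv) 5 (q • uB) := by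
  intro n
  have h5n : ((5 : ℚ)) ^ n ≠ 0 := by positivity
  refine ⟨(q / 5 ^ n) • uB, mem_uB (m + n) (z * (-8) ^ n) ?_, ?_⟩
  · have h1 : ((-40 : ℚ)) ^ n = (-8) ^ n * 5 ^ n := by rw [← mul_pow]; norm_num
    rw [pow_add, h1]
    field_simp
    push_cast
    linear_combination (((-8) : ℚ) ^ n) * hq
  · rw [smul_smul]
    congr 1
    field_simp
    norm_num

end Stmt18
namespace Stmt18

def g0 : Fin 2 → ℚ := ![8, 4]

lemma cop54 : IsCoprime ((5 : ℕ) : ℤ) (54 : ℤ) := by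
  rw [Int.isCoprime_iff_gcd_eq_one]; decide
lemma cop310 : IsCoprime ((3 : ℕ) : ℤ) (10 : ℤ) := by
  rw [Int.isCoprime_iff_gcd_eq_one]; decide
lemma cop596 : IsCoprime ((5 : ℕ) : ℤ) (96 : ℤ) := by
  rw [Int.isCoprime_iff_gcd_eq_one]; decide
lemma cop340 : IsCoprime ((3 : ℕ) : ℤ) (-40 : ℤ) := by
  rw [Int.isCoprime_iff_gcd_eq_one]; decide

lemma smul_phiA (q : ℚ) (z : Fin 2 → ℚ) : phiA (q • z) = q * phiA z := by
  unfold phiA; simp; ring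
lemma smul_psiA (q : ℚ) (z : Fin 2 → ℚ) : psiA (q • z) = q * psiA z := by
  unfold psiA; simp; ring
lemma smul_phiB (q : ℚ) (z : Fin 2 → ℚ) : phiB (q • z) = q * phiB z := by
  unfold phiB; simp; ring
lemma smul_psiB (q : ℚ) (z : Fin 2 → ℚ) : psiB (q • z) = q * psiB z := by
  unfold psiB; simp; ring

lemma A_decomp : ∃ s t : Fin 2 → ℚ, (11 : ℚ) • g0 = s + t ∧
    DivP (GAgrp Av) 3 s ∧ DivP (GAgrp Av) 5 t := by
  refine ⟨(1 : ℚ) • vA, (-1 : ℚ) • uA, ?_, div3_vA 0 1 (by norm_num),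
    div5_uA 0 (-1) (by norm_num)⟩
  funext i; fin_cases i <;> simp [g0, vA, uA] <;> norm_num

lemma A_nondecomp : ¬ ∃ s t : Fin 2 → ℚ, g0 = s + t ∧
    DivP (GAgrp Av) 3 s ∧ DivP (GAgrp Av) 5 t := by
  rintro ⟨s, t, heq, h3, h5⟩
  have hps : psiA s = 0 :=
    vanish Av hdetA psiA 10 3 (by norm_num) cop310 psiA_pow smul_psiA
      (fun v hv => intVec_psiA hv) h3
  have hpt : phiA t = 0 :=
    vanish Av hdetA phiA 54 5 (by norm_num) cop54 phiA_pow smul_phiA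
      (fun v hv => intVec_phiA hv) h5
  obtain ⟨h0, h0mem, hs0⟩ := h3 0
  have hsmem : s ∈ GAgrp Av := by rw [hs0]; simpa using h0mem
  -- coordinates of s
  have hsum0 : s 0 + t 0 = 8 := by
    have := congrFun heq 0; simp [g0] at this; linarith
  have hsum1 : s 1 + t 1 = 4 := by
    have := congrFun heq 1; simp [g0] at this; linarith
  have e1 : 89 * s 1 - 45 * s 0 = 0 := hps
  have e2 : t 0 - t 1 = 0 := hpt
  have hs1 : s 1 = 45 / 11 := by linarith
  have hs0' : s 0 = 89 / 11 := by linarith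
  have hs : s = (1 / 11 : ℚ) • vA := by
    funext i; fin_cases i <;> simp [vA, hs0', hs1] <;> norm_num
  obtain ⟨m, hm⟩ := GAgrp_le_Sgrp Av hdetA hsmem
  rw [hs, QA_pow_vA] at hm
  obtain ⟨z, hz⟩ := hm 0
  have hz1 : (54 : ℚ) ^ m * (1 / 11) * 89 = z := by
    have h := hz
    simp [vA] at h
    linarith [h]
  have hz' : (54 : ℤ) ^ m * 89 = 11 * z := by
    have : (((54 : ℤ) ^ m * 89 : ℤ) : ℚ) = ((11 * z : ℤ) : ℚ) := by
      push_cast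
      linear_combination 11 * hz1
    exact_mod_cast this
  have hdvd : (11 : ℤ) ∣ 54 ^ m * 89 := ⟨z, hz'⟩
  have h11 : Prime (11 : ℤ) := by norm_num
  rcases h11.dvd_mul.mp hdvd with h | h
  · have := h11.dvd_of_dvd_pow h
    norm_num at this
  · norm_num at h

lemma B_main (g s t : Fin 2 → ℚ) (hg : g ∈ GAgrp Bv) (h3 : DivP (GAgrp Bv) 3 s)
    (h5 : DivP (GAgrp Bv) 5 t) (heq : (11 : ℚ) • g = s + t) :
    ∃ s' t' : Fin 2 → ℚ, g = s' + t' ∧ DivP (GAgrp Bv) 3 s' ∧ DivP (GAgrp Bv) 5 t' := by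
  have hpsis : psiB s = 0 :=
    vanish Bv hdetB psiB (-40) 3 (by norm_num) cop340 psiB_pow smul_psiB
      (fun v hv => intVec_psiB hv) h3
  have hphit : phiB t = 0 :=
    vanish Bv hdetB phiB 96 5 (by norm_num) cop596 phiB_pow smul_phiB
      (fun v hv => intVec_phiB hv) h5
  set d : ℚ := s 1 / 137 with hd
  set c : ℚ := t 1 with hc
  have hpsis' : 137 * s 0 - 138 * s 1 = 0 := hpsis
  have hphit' : 2 * t 1 - t 0 = 0 := hphit
  have hs : s = d • vB := by
    funext i; fin_cases i
    · show s 0 = d * vB 0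
      rw [hd]; unfold vB; simp; linarith
    · show s 1 = d * vB 1
      rw [hd]; unfold vB; simp
  have ht : t = c • uB := by
    funext i; fin_cases i
    · show t 0 = c * uB 0
      rw [hc]; unfold uB; simp; linarith
    · show t 1 = c * uB 1
      rw [hc]; unfold uB; simp
  -- memberships
  obtain ⟨hh0, hh0mem, hseq⟩ := h3 0
  have hsmem : s ∈ GAgrp Bv := by rw [hseq]; simpa using hh0mem
  obtain ⟨hh1, hh1mem, hteq⟩ := h5 0
  have htmem : t ∈ GAgrp Bv := by rw [hteq]; simpa using hh1mem
  obtain ⟨m₁, hm₁⟩ := GAgrp_le_Sgrp Bv hdetB hsmem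
  obtain ⟨m₂, hm₂⟩ := GAgrp_le_Sgrp Bv hdetB htmem
  obtain ⟨m₃, hm₃⟩ := GAgrp_le_Sgrp Bv hdetB hg
  rw [hs, QB_pow_vB] at hm₁
  rw [ht, QB_pow_uB] at hm₂
  -- Y: integer value of 96^m₁ * d
  obtain ⟨z0, hz0⟩ := hm₁ 0
  obtain ⟨z1, hz1⟩ := hm₁ 1
  simp [vB] at hz0 hz1
  have hY : (96 : ℚ) ^ m₁ * d = (z0 : ℚ) - (z1 : ℚ) := by linarith
  obtain ⟨X, hX⟩ := hm₂ 1
  simp [uB] at hX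
  set m : ℕ := m₁ + m₂ + m₃ with hm
  have hmg : IntVec (Qmat Bv ^ m *ᵥ g) := by
    have hsplit : Qmat Bv ^ m *ᵥ g = Qmat Bv ^ (m₁ + m₂) *ᵥ (Qmat Bv ^ m₃ *ᵥ g) := by
      rw [Matrix.mulVec_mulVec, ← pow_add]
    rw [hsplit]
    exact intVec_pow_mulVec _ _ hm₃
  set DD : ℤ := 96 ^ (m₂ + m₃) * (z0 - z1) with hDD
  set CC : ℤ := (-40) ^ (m₁ + m₃) * X with hCC
  have hD : (96 : ℚ) ^ m * d = (DD : ℚ) := by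
    rw [show m = m₂ + m₃ + m₁ by omega, pow_add, hDD]
    push_cast
    linear_combination ((96 : ℚ) ^ (m₂ + m₃)) * hY
  have hC : ((-40 : ℚ)) ^ m * c = (CC : ℚ) := by
    rw [show m = m₁ + m₃ + m₂ by omega, pow_add, hCC]
    push_cast
    linear_combination (((-40) : ℚ) ^ (m₁ + m₃)) * hX
  have hgqr : g = (d / 11) • vB + (c / 11) • uB := by
    have hg11 : g = (11 : ℚ)⁻¹ • ((11 : ℚ) • g) := by rw [smul_smul]; norm_num
    rw [hg11, heq, hs, ht]
    funext i; fin_cases i <;> simp [vB, uB] <;> ring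
  have hQg : Qmat Bv ^ m *ᵥ g
      = ((96 : ℚ) ^ m * (d / 11)) • vB + (((-40) : ℚ) ^ m * (c / 11)) • uB := by
    rw [hgqr, Matrix.mulVec_add, QB_pow_vB, QB_pow_uB]
  rw [hQg] at hmg
  obtain ⟨w0, hw0⟩ := hmg 0
  obtain ⟨w1, hw1⟩ := hmg 1
  simp [vB, uB] at hw0 hw1
  have e0 : 138 * DD + 2 * CC = 11 * w0 := by
    have hcast : ((138 * DD + 2 * CC : ℤ) : ℚ) = ((11 * w0 : ℤ) : ℚ) := by
      push_cast
      rw [← hD, ← hC]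
      linear_combination 11 * hw0
    exact_mod_cast hcast
  have e1 : 137 * DD + CC = 11 * w1 := by
    have hcast : ((137 * DD + CC : ℤ) : ℚ) = ((11 * w1 : ℤ) : ℚ) := by
      push_cast
      rw [← hD, ← hC]
      linear_combination 11 * hw1
    exact_mod_cast hcast
  have h11 : Prime (11 : ℤ) := by norm_num
  have h136 : (11 : ℤ) ∣ 136 * DD := ⟨2 * w1 - w0, by linarith⟩
  have hdvdD : (11 : ℤ) ∣ DD := by
    rcases h11.dvd_mul.mp h136 with h | h
    · norm_num at h
    · exact h
  obtain ⟨Y1, hY1⟩ := hdvdD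
  have hdvdC : (11 : ℤ) ∣ CC := ⟨w1 - 137 * Y1, by linarith⟩
  obtain ⟨X1, hX1⟩ := hdvdC
  refine ⟨(d / 11) • vB, (c / 11) • uB, hgqr, div3_vB m Y1 ?_, div5_uB m X1 ?_⟩
  · have hcast : (96 : ℚ) ^ m * d = ((11 * Y1 : ℤ) : ℚ) := by rw [hD, hY1]
    push_cast at hcast
    linear_combination (1 / 11 : ℚ) * hcast
  · have hcast : ((-40 : ℚ)) ^ m * c = ((11 * X1 : ℤ) : ℚ) := by rw [hC, hX1]
    push_cast at hcast
    linear_combination (1 / 11 : ℚ) * hcast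

end Stmt18
set_option maxHeartbeats 1000000
set_option synthInstance.maxHeartbeats 1000000
namespace Stmt18

lemma coe_nsmul (H : AddSubgroup (Fin 2 → ℚ)) (k : ℕ) (x : H) :
    ((k • x : H) : Fin 2 → ℚ) = (k : ℚ) • (x : Fin 2 → ℚ) := by
  push_cast
  rw [Nat.cast_smul_eq_nsmul]

lemma g0_mem : g0 ∈ GAgrp Av := by
  apply mem_GAgrp_of_pow Av hdetA g0 ![8, 4] 0
  rw [pow_zero, Matrix.one_mulVec]
  funext i; fin_cases i <;> simp [g0]

lemma div_transfer {H K : AddSubgroup (Fin 2 → ℚ)} (e : H ≃+ K) (p : ℕ) {s : Fin 2 → ℚ}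
    (hs : s ∈ H) (hdiv : DivP H p s) : DivP K p ((e ⟨s, hs⟩ : K) : Fin 2 → ℚ) := by
  intro n
  obtain ⟨h, hmem, hxe⟩ := hdiv n
  have hx' : (⟨s, hs⟩ : H) = (p ^ n : ℕ) • (⟨h, hmem⟩ : H) := by
    apply Subtype.ext
    rw [coe_nsmul]
    push_cast
    exact hxe
  refine ⟨((e ⟨h, hmem⟩ : K) : Fin 2 → ℚ), (e ⟨h, hmem⟩).2, ?_⟩
  rw [hx', map_nsmul, coe_nsmul]
  push_cast
  rfl

theorem final :
    ¬ Nonempty (GAgrp Av ≃+ GAgrp Bv) := by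
  rintro ⟨e⟩
  obtain ⟨s, t, hsum, h3, h5⟩ := A_decomp
  have hsmem : s ∈ GAgrp Av := by
    obtain ⟨h, hm, he⟩ := h3 0; rw [he]; simpa using hm
  have htmem : t ∈ GAgrp Av := by
    obtain ⟨h, hm, he⟩ := h5 0; rw [he]; simpa using hm
  set X : GAgrp Av := ⟨g0, g0_mem⟩ with hX
  set S : GAgrp Av := ⟨s, hsmem⟩ with hS
  set T : GAgrp Av := ⟨t, htmem⟩ with hT
  have hsum' : (11 : ℕ) • X = S + T := by
    apply Subtype.ext
    rw [coe_nsmul]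
    push_cast
    exact hsum
  have hEsum : (11 : ℚ) • ((e X : GAgrp Bv) : Fin 2 → ℚ)
      = ((e S : GAgrp Bv) : Fin 2 → ℚ) + ((e T : GAgrp Bv) : Fin 2 → ℚ) := by
    have h1 : e ((11 : ℕ) • X) = e S + e T := by rw [hsum', map_add]
    rw [map_nsmul] at h1
    have h2 := congrArg (fun y : GAgrp Bv => (y : Fin 2 → ℚ)) h1
    simp only [AddSubgroup.coe_add] at h2
    rw [coe_nsmul] at h2
    push_cast at h2
    exact h2
  have hd3 : DivP (GAgrp Bv) 3 ((e S : GAgrp Bv) : Fin 2 → ℚ) := div_transfer e 3 hsmem h3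
  have hd5 : DivP (GAgrp Bv) 5 ((e T : GAgrp Bv) : Fin 2 → ℚ) := div_transfer e 5 htmem h5
  obtain ⟨s', t', hg', hd3', hd5'⟩ :=
    B_main ((e X : GAgrp Bv) : Fin 2 → ℚ) _ _ (e X).2 hd3 hd5 hEsum
  have hs'mem : s' ∈ GAgrp Bv := by
    obtain ⟨h, hm, he⟩ := hd3' 0; rw [he]; simpa using hm
  have ht'mem : t' ∈ GAgrp Bv := by
    obtain ⟨h, hm, he⟩ := hd5' 0; rw [he]; simpa using hm
  have hEX : e X = (⟨s', hs'mem⟩ : GAgrp Bv) + ⟨t', ht'mem⟩ := by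
    apply Subtype.ext
    rw [AddSubgroup.coe_add]
    exact hg'
  have hXeq : X = e.symm ⟨s', hs'mem⟩ + e.symm ⟨t', ht'mem⟩ := by
    have := congrArg e.symm hEX
    rw [AddEquiv.symm_apply_apply, map_add] at this
    exact this
  apply A_nondecomp
  refine ⟨((e.symm ⟨s', hs'mem⟩ : GAgrp Av) : Fin 2 → ℚ),
    ((e.symm ⟨t', ht'mem⟩ : GAgrp Av) : Fin 2 → ℚ), ?_, ?_, ?_⟩
  · have := congrArg (fun y : GAgrp Av => (y : Fin 2 → ℚ)) hXeq
    simpa using this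
  · exact div_transfer e.symm 3 hs'mem hd3'
  · exact div_transfer e.symm 5 ht'mem hd5'

end Stmt18

theorem stmt18 :
    ¬ Nonempty (GAgrp !![(99 : ℤ), -89; 45, -35] ≃+
                GAgrp !![(-178 : ℤ), 276; -137, 234]) :=
  Stmt18.final
end
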